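/- Adaptive Hoeffding's Inequality: Let I_1, I_2, ... be an infinite sequence of independent, identically distributed random variables taking values in {0,1} with common mean R_M, let μ̂^(n) = (1/n)·Σ_{i=1}^n I_i denote the sample mean of the first n samples, and define ε(σ, n) = sqrt( (0.6·log(log_{1.1} n + 1) + (1/1.8)·log(24/σ)) / n ). Then for every σ ∈ (0,1) and every measurable random variable J : Ω → ℕ with J ≥ 1 almost surely (J may depend on the sequence I_1, I_2, ...), the probability that |μ̂^(J) − R_M| ≤ ε(σ, J) is at least 1 − σ. -/

import Mathlib

open MeasureTheory ProbabilityTheory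
open scoped ENNReal NNReal

lemma bern_D_pos {p : ℝ} (hp0 : 0 ≤ p) (hp1 : p ≤ 1) (t : ℝ) :
    0 < 1 - p + p * Real.exp t := by
  rcases eq_or_lt_of_le hp0 with h | h
  · simp [← h]
  · nlinarith [Real.exp_pos t, mul_pos h (Real.exp_pos t)]

lemma bern_mgf_bound {p : ℝ} (hp0 : 0 ≤ p) (hp1 : p ≤ 1) {t : ℝ} (ht : 0 ≤ t) :
    1 - p + p * Real.exp t ≤ Real.exp (t * p + t ^ 2 / 8) := by
  set D : ℝ → ℝ := fun s => 1 - p + p * Real.exp s with hDdef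
  have hD : ∀ s, 0 < D s := bern_D_pos hp0 hp1
  set ψ : ℝ → ℝ := fun s => p + s / 4 - p * Real.exp s / D s with hψdef
  set φ : ℝ → ℝ := fun s => s * p + s ^ 2 / 8 - Real.log (D s) with hφdef
  have hD' : ∀ s, HasDerivAt D (p * Real.exp s) s := fun s =>
    ((Real.hasDerivAt_exp s).const_mul p).const_add (1 - p)
  have hφ' : ∀ s, HasDerivAt φ (ψ s) s := by
    intro s
    have h1 : HasDerivAt (fun s : ℝ => s * p + s ^ 2 / 8) (p + s / 4) s := by
      have := ((hasDerivAt_id s).mul_const p).add ((hasDerivAt_pow 2 s).div_const 8)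
      refine this.congr_deriv ?_
      simp; ring
    have h2 : HasDerivAt (fun s => Real.log (D s)) (p * Real.exp s / D s) s :=
      (hD' s).log (hD s).ne'
    exact h1.sub h2
  have hψ' : ∀ s, HasDerivAt ψ (1/4 - p * Real.exp s * (1 - p) / (D s)^2) s := by
    intro s
    have h1 : HasDerivAt (fun s : ℝ => p + s / 4) (1/4) s := by
      simpa using ((hasDerivAt_id s).div_const 4).const_add p
    have h2 : HasDerivAt (fun s => p * Real.exp s / D s)
        ((p * Real.exp s * D s - p * Real.exp s * (p * Real.exp s)) / (D s)^2) s :=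
      ((Real.hasDerivAt_exp s).const_mul p).div (hD' s) (hD s).ne'
    have h3 := h1.sub h2
    refine h3.congr_deriv ?_
    have hDs : D s = 1 - p + p * Real.exp s := rfl
    have := (hD s).ne'
    field_simp
    ring
  have hψmono : Monotone ψ := by
    apply monotone_of_deriv_nonneg (fun s => (hψ' s).differentiableAt)
    intro s
    rw [(hψ' s).deriv]
    have hDs : D s = 1 - p + p * Real.exp s := rfl
    rw [sub_nonneg, div_le_iff₀ (pow_pos (hD s) 2)]
    rw [hDs]
    nlinarith [sq_nonneg (1 - p - p * Real.exp s)]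
  have hψ0 : ψ 0 = 0 := by simp [hψdef, hDdef]
  have hφmono : MonotoneOn φ (Set.Ici 0) := by
    apply monotoneOn_of_deriv_nonneg (convex_Ici 0)
      (Continuous.continuousOn (by
        have : Differentiable ℝ φ := fun s => (hφ' s).differentiableAt
        exact this.continuous))
      (fun s _ => (hφ' s).differentiableAt.differentiableWithinAt)
    intro s hs
    rw [interior_Ici] at hs
    rw [(hφ' s).deriv]
    have : ψ 0 ≤ ψ s := hψmono (le_of_lt hs)
    linarith [hψ0 ▸ this]
  have hφ0 : φ 0 = 0 := by simp [hφdef, hDdef]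
  have hφt : 0 ≤ φ t := by
    have := hφmono (Set.self_mem_Ici) (Set.mem_Ici.2 ht) ht
    linarith [hφ0 ▸ this]
  have hlog : Real.log (D t) ≤ t * p + t ^ 2 / 8 := by
    simp only [hφdef] at hφt; linarith
  calc 1 - p + p * Real.exp t = D t := rfl
    _ ≤ Real.exp (t * p + t ^ 2 / 8) := by
        rw [← Real.exp_log (hD t)]; exact Real.exp_le_exp.2 hlog

section Core
variable {Ω : Type*} [MeasurableSpace Ω]

lemma onesided (P : Measure Ω) [IsProbabilityMeasure P]
    (I : ℕ → Ω → ℝ) (hmeas : ∀ i, Measurable (I i))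
    (hindep : iIndepFun I P)
    (h01 : ∀ i ω, I i ω = 0 ∨ I i ω = 1)
    (RM : ℝ) (hR : ∀ i, ∫ ω, I i ω ∂P = RM)
    (N : ℕ) (hN : 1 ≤ N) (c : ℝ) (hc : 0 < c) :
    P {ω | ∃ n, 1 ≤ n ∧ n ≤ N ∧ c ≤ (∑ i ∈ Finset.range n, I i ω) - n * RM}
      ≤ ENNReal.ofReal (Real.exp (-2 * c ^ 2 / N)) := by
  -- basic facts
  have hI01 : ∀ i ω, 0 ≤ I i ω ∧ I i ω ≤ 1 := by
    intro i ω; rcases h01 i ω with h | h <;> simp [h]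
  have hInt : ∀ i, Integrable (I i) P := fun i =>
    (integrable_const (1 : ℝ)).mono' (hmeas i).aestronglyMeasurable
      (Filter.Eventually.of_forall fun ω => by
        rw [Real.norm_eq_abs, abs_le]
        constructor <;> linarith [(hI01 i ω).1, (hI01 i ω).2])
  have hRM0 : 0 ≤ RM := by
    rw [← hR 0]; exact integral_nonneg fun ω => (hI01 0 ω).1
  have hRM1 : RM ≤ 1 := by
    rw [← hR 0]
    calc ∫ ω, I 0 ω ∂P ≤ ∫ _, (1 : ℝ) ∂P :=
          integral_mono (hInt 0) (integrable_const 1) fun ω => (hI01 0 ω).2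
      _ = 1 := by simp
  have hNR : (0 : ℝ) < N := by exact_mod_cast hN
  set L : ℝ := 4 * c / N with hLdef
  have hL : 0 < L := by positivity
  set S : ℕ → Ω → ℝ := fun n ω => ∑ i ∈ Finset.range n, I i ω with hSdef
  set h : ℕ → Ω → ℝ := fun n ω => Real.exp (L * (S (n + 1) ω - ((n : ℝ) + 1) * RM))
    with hhdef
  have hSb : ∀ n ω, 0 ≤ S n ω ∧ S n ω ≤ n := by
    intro n ω
    constructor
    · exact Finset.sum_nonneg fun i _ => (hI01 i ω).1
    · calc S n ω ≤ ∑ i ∈ Finset.range n, (1 : ℝ) :=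
            Finset.sum_le_sum fun i _ => (hI01 i ω).2
        _ = n := by simp
  have hSmeas : ∀ n, Measurable (S n) := fun n =>
    Finset.measurable_sum _ fun i _ => hmeas i
  have hhmeas : ∀ n, Measurable (h n) := fun n =>
    (((hSmeas (n + 1)).sub measurable_const).const_mul L).exp
  have hhbound : ∀ n ω, ‖h n ω‖ ≤ Real.exp (L * ((n : ℝ) + 1)) := by
    intro n ω
    rw [Real.norm_eq_abs, abs_of_pos (Real.exp_pos _), Real.exp_le_exp]
    have h1 : S (n + 1) ω - ((n : ℝ) + 1) * RM ≤ (n : ℝ) + 1 := by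
      have := (hSb (n + 1) ω).2
      push_cast at this ⊢
      nlinarith
    exact mul_le_mul_of_nonneg_left h1 hL.le
  have hhint : ∀ n, Integrable (h n) P := fun n =>
    (integrable_const _).mono' (hhmeas n).aestronglyMeasurable
      (Filter.Eventually.of_forall (hhbound n))
  set hsm : ∀ i, StronglyMeasurable (I i) := fun i => (hmeas i).stronglyMeasurable
  set ℱ := MeasureTheory.Filtration.natural I hsm with hFdef
  have hIF : ∀ i n, i ≤ n → StronglyMeasurable[ℱ n] (I i) := fun i n hin =>
    (MeasureTheory.Filtration.stronglyAdapted_natural hsm i).mono (ℱ.mono hin)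
  have hadp : StronglyAdapted ℱ h := by
    intro n
    have hS : StronglyMeasurable[ℱ n] (S (n + 1)) := by
      apply Finset.stronglyMeasurable_fun_sum
      intro i hi
      exact hIF i n (Nat.lt_succ_iff.mp (Finset.mem_range.mp hi))
    exact (Real.continuous_exp.comp_stronglyMeasurable
      ((hS.sub stronglyMeasurable_const).const_mul L))
  -- submartingale step
  have hstep : ∀ n, h n ≤ᵐ[P] P[h (n + 1)|ℱ n] := by
    intro n
    set g : Ω → ℝ := fun ω => Real.exp (L * (I (n + 1) ω - RM)) with hgdef
    have hgmeas : Measurable g := (((hmeas (n + 1)).sub measurable_const).const_mul L).exp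
    have hgbound : ∀ ω, ‖g ω‖ ≤ Real.exp L := by
      intro ω
      rw [Real.norm_eq_abs, abs_of_pos (Real.exp_pos _), Real.exp_le_exp]
      nlinarith [(hI01 (n + 1) ω).2]
    have hgint : Integrable g P :=
      (integrable_const _).mono' hgmeas.aestronglyMeasurable
        (Filter.Eventually.of_forall hgbound)
    have hprod : h (n + 1) = h n * g := by
      funext ω
      simp only [hhdef, hgdef, Pi.mul_apply, ← Real.exp_add, hSdef]
      congr 1
      rw [Finset.sum_range_succ]
      push_cast
      ring
    have hcond1 : P[h (n + 1)|ℱ n] =ᵐ[P] h n * P[g|ℱ n] := by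
      rw [hprod]
      exact condExp_mul_of_stronglyMeasurable_left (hadp n) (hprod ▸ hhint (n + 1)) hgint
    have hgcomap : StronglyMeasurable[MeasurableSpace.comap (I (n + 1)) inferInstance] g :=
      (Measurable.stronglyMeasurable
        (((comap_measurable (I (n + 1))).sub measurable_const).const_mul L).exp)
    have hindep' : ProbabilityTheory.Indep
        (MeasurableSpace.comap (I (n + 1)) inferInstance) (ℱ n) P :=
      hindep.indep_comap_natural_of_lt hsm (Nat.lt_succ_self n)
    have hcond2 : P[g|ℱ n] =ᵐ[P] fun _ => ∫ ω, g ω ∂P :=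
      condExp_indep_eq ((hmeas (n + 1)).comap_le) (ℱ.le n) hgcomap hindep'
    have hg1 : 1 ≤ ∫ ω, g ω ∂P := by
      have hle : ∀ ω, 1 + L * (I (n + 1) ω - RM) ≤ g ω := by
        intro ω
        have := Real.add_one_le_exp (L * (I (n + 1) ω - RM))
        linarith
      have hgi : Integrable (fun ω => L * (I (n + 1) ω - RM)) P := by
        exact ((hInt (n + 1)).sub (integrable_const RM)).const_mul L
      have hintL : Integrable (fun ω => 1 + L * (I (n + 1) ω - RM)) P := by
        exact (integrable_const 1).add hgi
      have : ∫ ω, (1 + L * (I (n + 1) ω - RM)) ∂P = 1 := by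
        rw [integral_add (integrable_const 1) hgi,
          integral_const_mul, integral_sub (hInt (n + 1)) (integrable_const RM), hR]
        simp
      calc (1 : ℝ) = ∫ ω, (1 + L * (I (n + 1) ω - RM)) ∂P := this.symm
        _ ≤ ∫ ω, g ω ∂P := integral_mono hintL hgint hle
    filter_upwards [hcond1, hcond2] with ω e1 e2
    rw [e1, Pi.mul_apply, e2]
    calc h n ω = h n ω * 1 := (mul_one _).symm
      _ ≤ h n ω * ∫ ω, g ω ∂P :=
          mul_le_mul_of_nonneg_left hg1 (Real.exp_pos _).le
  have hsub : Submartingale h ℱ P := submartingale_nat hadp hhint hstep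
  have hnonneg : 0 ≤ h := by
    rw [Pi.le_def]; intro n; rw [Pi.le_def]; intro ω
    exact (Real.exp_pos _).le
  -- write N = M + 1
  obtain ⟨M, rfl⟩ : ∃ M, N = M + 1 := ⟨N - 1, (Nat.succ_pred_eq_of_pos hN).symm⟩
  -- bound on the expectation of h M
  have hEh : ∫ ω, h M ω ∂P ≤ Real.exp (((M : ℝ) + 1) * L ^ 2 / 8) := by
    have h0 : (0:ℝ) ≤ 1 - RM + RM * Real.exp L := by
      have := mul_nonneg hRM0 (Real.exp_pos L).le
      linarith
    have e1 : ∀ ω, h M ω = Real.exp (L * S (M + 1) ω)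
        * Real.exp (-(L * (((M:ℝ) + 1) * RM))) := by
      intro ω
      have hr : h M ω = Real.exp (L * (S (M + 1) ω - ((M:ℝ) + 1) * RM)) := rfl
      rw [hr, ← Real.exp_add]
      exact congrArg Real.exp (by ring)
    have e2 : ∫ ω, h M ω ∂P
        = (∫ ω, Real.exp (L * S (M + 1) ω) ∂P)
          * Real.exp (-(L * (((M:ℝ) + 1) * RM))) := by
      simp only [e1]
      rw [integral_mul_const]
    have e3 : ∫ ω, Real.exp (L * S (M + 1) ω) ∂P
        = mgf (∑ i ∈ Finset.range (M + 1), I i) P L := by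
      simp only [mgf, hSdef, Finset.sum_apply]
    have hmgfi : ∀ i ∈ Finset.range (M + 1), mgf (I i) P L = 1 - RM + RM * Real.exp L := by
      intro i _
      have hfe : (fun ω => Real.exp (L * I i ω)) = fun ω => 1 + (Real.exp L - 1) * I i ω := by
        funext ω
        rcases h01 i ω with hω | hω <;> simp [hω]
      have hgi2 : Integrable (fun ω => (Real.exp L - 1) * I i ω) P := by
        exact (hInt i).const_mul _
      simp only [mgf]
      rw [hfe, integral_add (integrable_const 1) hgi2, integral_const_mul, hR i,
        integral_const]
      simp
      ring
    have e4 : mgf (∑ i ∈ Finset.range (M + 1), I i) P L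
        = (1 - RM + RM * Real.exp L) ^ (M + 1) := by
      rw [hindep.mgf_sum hmeas (Finset.range (M + 1)), Finset.prod_congr rfl hmgfi,
        Finset.prod_const, Finset.card_range]
    have h5 : (1 - RM + RM * Real.exp L) ^ (M + 1)
        ≤ Real.exp (L * RM + L ^ 2 / 8) ^ (M + 1) :=
      pow_le_pow_left₀ h0 (bern_mgf_bound hRM0 hRM1 hL.le) _
    rw [e2, e3, e4]
    calc (1 - RM + RM * Real.exp L) ^ (M + 1) * Real.exp (-(L * (((M:ℝ) + 1) * RM)))
        ≤ Real.exp (L * RM + L ^ 2 / 8) ^ (M + 1)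
          * Real.exp (-(L * (((M:ℝ) + 1) * RM))) :=
          mul_le_mul_of_nonneg_right h5 (Real.exp_pos _).le
      _ = Real.exp (((M:ℝ) + 1) * L ^ 2 / 8) := by
          rw [← Real.exp_nat_mul, ← Real.exp_add]
          congr 1
          push_cast
          ring
  -- maximal inequality
  set ε : NNReal := Real.toNNReal (Real.exp (L * c)) with hεdef
  have hεc : (ε : ℝ) = Real.exp (L * c) := Real.coe_toNNReal _ (Real.exp_pos _).le
  set A : Set Ω := {ω | (ε : ℝ) ≤ (Finset.range (M + 1)).sup' Finset.nonempty_range_add_one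
    fun k => h k ω} with hAdef
  have hmax : (ε : ℝ≥0∞) * P A ≤ ENNReal.ofReal (∫ ω in A, h M ω ∂P) := by
    have := maximal_ineq hsub hnonneg (ε := ε) M
    exact this
  have hset : ∫ ω in A, h M ω ∂P ≤ ∫ ω, h M ω ∂P :=
    setIntegral_le_integral (hhint M)
      (Filter.Eventually.of_forall fun ω => (Real.exp_pos _).le)
  -- event inclusion
  have hincl : {ω | ∃ n, 1 ≤ n ∧ n ≤ M + 1 ∧ c ≤ (∑ i ∈ Finset.range n, I i ω) - n * RM}
      ⊆ A := by
    rintro ω ⟨n, hn1, hn2, hnc⟩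
    obtain ⟨k, rfl⟩ : ∃ k, n = k + 1 := ⟨n - 1, (Nat.succ_pred_eq_of_pos hn1).symm⟩
    have hkmem : k ∈ Finset.range (M + 1) := Finset.mem_range.mpr (by omega)
    have hhk : (ε : ℝ) ≤ h k ω := by
      rw [hεc, hhdef, Real.exp_le_exp]
      have : ((k : ℝ) + 1) = ((k + 1 : ℕ) : ℝ) := by push_cast; ring
      rw [this]
      exact mul_le_mul_of_nonneg_left (by exact_mod_cast hnc) hL.le
    exact le_trans hhk (Finset.le_sup' (fun k => h k ω) hkmem)
  -- combine
  have hPA : P A ≤ ENNReal.ofReal (Real.exp (-2 * c ^ 2 / (M + 1 : ℕ))) := by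
    have h1 : (ε : ℝ≥0∞) * P A ≤ ENNReal.ofReal (Real.exp (((M : ℝ) + 1) * L ^ 2 / 8)) :=
      le_trans hmax (ENNReal.ofReal_le_ofReal (le_trans hset hEh))
    have hε0 : (ε : ℝ≥0∞) ≠ 0 := by
      simp only [ne_eq, ENNReal.coe_eq_zero]
      rw [hεdef]
      simp [Real.toNNReal_eq_zero, not_le, Real.exp_pos]
    have hεtop : (ε : ℝ≥0∞) ≠ ⊤ := ENNReal.coe_ne_top
    have h2 : P A ≤ ENNReal.ofReal (Real.exp (((M : ℝ) + 1) * L ^ 2 / 8)) / (ε : ℝ≥0∞) := by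
      rw [ENNReal.le_div_iff_mul_le (Or.inl hε0) (Or.inl hεtop), mul_comm]
      exact h1
    have hεo : (ε : ℝ≥0∞) = ENNReal.ofReal (Real.exp (L * c)) := rfl
    rw [hεo, ← ENNReal.ofReal_div_of_pos (Real.exp_pos _), ← Real.exp_sub] at h2
    have harith : ((M : ℝ) + 1) * L ^ 2 / 8 - L * c = -2 * c ^ 2 / ((M + 1 : ℕ) : ℝ) := by
      have hM1 : ((M + 1 : ℕ) : ℝ) = (M : ℝ) + 1 := by push_cast; ring
      rw [hLdef, hM1]
      have : ((M : ℝ) + 1) ≠ 0 := by push_cast at hNR ⊢; linarith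
      field_simp
      ring
    rw [harith] at h2
    exact h2
  exact le_trans (measure_mono hincl) hPA


end Core

lemma pseries_partial (n : ℕ) :
    ∑ k ∈ Finset.range n, ((k : ℝ) + 1) ^ (-(12/11) : ℝ) ≤ 12 := by
  rcases n with _ | m
  · norm_num
  · rw [Finset.sum_range_succ']
    have hf0 : ((0:ℕ) : ℝ) + 1 = 1 := by norm_num
    have hanti : AntitoneOn (fun x : ℝ => x ^ (-(12/11) : ℝ)) (Set.Icc 1 (1 + (m:ℝ))) := by
      intro x hx y hy hxy
      have hx0 : (0:ℝ) < x := lt_of_lt_of_le one_pos hx.1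
      simp only
      rw [Real.rpow_neg hx0.le, Real.rpow_neg (hx0.trans_le hxy).le]
      exact inv_anti₀ (Real.rpow_pos_of_pos hx0 _)
        (Real.rpow_le_rpow hx0.le hxy (by norm_num))
    have hint := hanti.sum_le_integral
    have hval : ∫ x in (1:ℝ)..(1 + (m:ℝ)), x ^ (-(12/11) : ℝ) ≤ 11 := by
      rw [integral_rpow (Or.inr ⟨by norm_num, by
        intro hmem
        rw [Set.uIcc_of_le (le_add_of_nonneg_right (Nat.cast_nonneg m))] at hmem
        have := hmem.1
        linarith⟩)]
      have h1 : ((1:ℝ) + (m:ℝ)) ^ ((-(12/11) : ℝ) + 1) ≥ 0 := Real.rpow_nonneg (by positivity) _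
      have h2 : (1:ℝ) ^ ((-(12/11) : ℝ) + 1) = 1 := Real.one_rpow _
      rw [h2]
      have : (-(12/11) : ℝ) + 1 = -(1/11) := by norm_num
      rw [this] at h1 ⊢
      rw [div_le_iff_of_neg (by norm_num : (-(1/11) : ℝ) < 0)]
      linarith
    have hsum : ∑ i ∈ Finset.range m, (((i:ℝ) + 1) + 1) ^ (-(12/11) : ℝ) ≤ 11 := by
      refine le_trans (le_of_eq ?_) (le_trans hint hval)
      apply Finset.sum_congr rfl
      intro i _
      push_cast
      ring_nf
    calc (∑ i ∈ Finset.range m, (((i + 1 : ℕ) : ℝ) + 1) ^ (-(12/11) : ℝ))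
          + (((0:ℕ):ℝ) + 1) ^ (-(12/11) : ℝ)
        = (∑ i ∈ Finset.range m, (((i:ℝ) + 1) + 1) ^ (-(12/11) : ℝ)) + 1 := by
          rw [hf0, Real.one_rpow]
          congr 1
          apply Finset.sum_congr rfl
          intro i _
          push_cast
          ring_nf
      _ ≤ 11 + 1 := by linarith
      _ = 12 := by norm_num


/-- Adaptive Hoeffding's Inequality: for an infinite i.i.d. sequence of `{0,1}`-valued
random variables with common mean `RM`, any `σ ∈ (0,1)` and any measurable random
sample size `J ≥ 1`, the probability that the sample mean of the first `J` samples
is within `ε(σ, J) = sqrt((0.6 log(log_{1.1} J + 1) + (1/1.8) log(24/σ)) / J)`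
of `RM` is at least `1 - σ`. -/
theorem adaptive_hoeffding
    {Ω : Type*} [MeasurableSpace Ω] (P : Measure Ω) [IsProbabilityMeasure P]
    (I : ℕ → Ω → ℝ)
    (hmeas : ∀ i, Measurable (I i))
    (hindep : iIndepFun I P)
    (hid : ∀ i j, IdentDistrib (I i) (I j) P P)
    (h01 : ∀ i ω, I i ω = 0 ∨ I i ω = 1)
    (RM : ℝ) (hR : ∀ i, ∫ ω, I i ω ∂P = RM)
    (σ : ℝ) (hσ : σ ∈ Set.Ioo (0 : ℝ) 1)
    (J : Ω → ℕ) (hJmeas : Measurable J) (hJ : ∀ᵐ ω ∂P, 1 ≤ J ω) :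
    (1 : ℝ) - σ ≤
      (P {ω | |(1 / (J ω : ℝ)) * ∑ i ∈ Finset.range (J ω), I i ω - RM| ≤
        Real.sqrt ((0.6 * Real.log (Real.log (J ω : ℝ) / Real.log 1.1 + 1)
          + (1 / 1.8) * Real.log (24 / σ)) / (J ω : ℝ))}).toReal := by
  obtain ⟨hσ0, hσ1⟩ := hσ
  have hI01 : ∀ i ω, 0 ≤ I i ω ∧ I i ω ≤ 1 := by
    intro i ω; rcases h01 i ω with h | h <;> simp [h]
  have hInt : ∀ i, Integrable (I i) P := fun i =>
    (integrable_const (1 : ℝ)).mono' (hmeas i).aestronglyMeasurable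
      (Filter.Eventually.of_forall fun ω => by
        rw [Real.norm_eq_abs, abs_le]
        constructor <;> linarith [(hI01 i ω).1, (hI01 i ω).2])
  set c₀ : ℝ := 1 / 1.8 * Real.log (24 / σ) with hc₀def
  have h24 : (1:ℝ) < 24 / σ := by
    rw [lt_div_iff₀ hσ0]; linarith
  have hc₀ : 0 < c₀ := mul_pos (by norm_num) (Real.log_pos h24)
  set S : ℕ → Ω → ℝ := fun n ω => ∑ i ∈ Finset.range n, I i ω with hSdef
  set v : ℕ → ℝ := fun n => 0.6 * Real.log (Real.log (n:ℝ) / Real.log 1.1 + 1) + c₀ with hvdef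
  have hlogb0' : ∀ n : ℕ, 1 ≤ n → (0:ℝ) ≤ Real.log (n:ℝ) / Real.log 1.1 := by
    intro n hn
    exact div_nonneg (Real.log_nonneg (by exact_mod_cast hn)) (Real.log_nonneg (by norm_num))
  have hv0 : ∀ n : ℕ, 1 ≤ n → 0 < v n := by
    intro n hn
    have h2 : (0:ℝ) ≤ Real.log (Real.log (n:ℝ) / Real.log 1.1 + 1) :=
      Real.log_nonneg (by linarith [hlogb0' n hn])
    have : (0:ℝ) ≤ 0.6 * Real.log (Real.log (n:ℝ) / Real.log 1.1 + 1) := by nlinarith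
    simp only [hvdef]
    linarith
  set Bad : Set Ω := ⋃ n : ℕ, ⋃ (_ : 1 ≤ n), {ω | Real.sqrt (n * v n) < |S n ω - n * RM|}
    with hBad
  have hBadmeas : MeasurableSet Bad := by
    apply MeasurableSet.iUnion; intro n; apply MeasurableSet.iUnion; intro _
    exact measurableSet_lt measurable_const
      ((Finset.measurable_sum _ fun i _ => hmeas i).sub measurable_const).abs
  set Nk : ℕ → ℕ := fun k => ⌊(1.1:ℝ)^(k+1)⌋₊ with hNkdef
  set tk : ℕ → ℝ := fun k => Real.sqrt ((1.1:ℝ)^k * (0.6 * Real.log ((k:ℝ)+1) + c₀))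
    with htkdef
  have hwk : ∀ k : ℕ, 0 < 0.6 * Real.log ((k:ℝ)+1) + c₀ := by
    intro k
    have h1 : (0:ℝ) ≤ Real.log ((k:ℝ)+1) :=
      Real.log_nonneg (le_add_of_nonneg_left (Nat.cast_nonneg k))
    nlinarith
  have htk0 : ∀ k, 0 < tk k := fun k =>
    Real.sqrt_pos.mpr (mul_pos (pow_pos (by norm_num) k) (hwk k))
  have hNk1 : ∀ k, 1 ≤ Nk k := by
    intro k
    apply Nat.le_floor
    push_cast
    exact one_le_pow₀ (by norm_num)
  have hNkle : ∀ k, (Nk k : ℝ) ≤ (1.1:ℝ)^(k+1) := fun k => Nat.floor_le (by positivity)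
  set Up : ℕ → Set Ω := fun k =>
    {ω | ∃ n, 1 ≤ n ∧ n ≤ Nk k ∧ tk k ≤ (∑ i ∈ Finset.range n, I i ω) - n * RM} with hUp
  set Dn : ℕ → Set Ω := fun k =>
    {ω | ∃ n, 1 ≤ n ∧ n ≤ Nk k ∧ tk k ≤ n * RM - S n ω} with hDn
  have hcover : Bad ⊆ ⋃ k : ℕ, Up k ∪ Dn k := by
    intro ω hω
    simp only [hBad, Set.mem_iUnion, Set.mem_setOf_eq] at hω
    obtain ⟨n, hn1, hn⟩ := hω
    have hnR : (1:ℝ) ≤ (n:ℝ) := by exact_mod_cast hn1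
    have hb : (1:ℝ) < 1.1 := by norm_num
    set k := ⌊Real.logb 1.1 (n:ℝ)⌋₊ with hkdef
    have hlogb0 : 0 ≤ Real.logb 1.1 (n:ℝ) := Real.logb_nonneg hb hnR
    have hk1 : (k:ℝ) ≤ Real.logb 1.1 (n:ℝ) := Nat.floor_le hlogb0
    have hk2 : Real.logb 1.1 (n:ℝ) < (k:ℝ) + 1 := Nat.lt_floor_add_one _
    have hn0 : (0:ℝ) < n := by linarith
    have hlow : (1.1:ℝ)^k ≤ (n:ℝ) := by
      have := (Real.le_logb_iff_rpow_le hb hn0).mp hk1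
      rwa [Real.rpow_natCast] at this
    have hup : (n:ℝ) < (1.1:ℝ)^(k+1) := by
      have h' := (Real.logb_lt_iff_lt_rpow hb hn0).mp hk2
      rwa [show ((k:ℝ)+1) = ((k+1 : ℕ):ℝ) by push_cast; ring, Real.rpow_natCast] at h'
    have hnNk : n ≤ Nk k := Nat.le_floor (le_of_lt hup)
    have htkan : tk k ≤ Real.sqrt ((n:ℝ) * v n) := by
      apply Real.sqrt_le_sqrt
      have hvle : 0.6 * Real.log ((k:ℝ)+1) + c₀ ≤ v n := by
        have hlogk : Real.log ((k:ℝ)+1) ≤ Real.log (Real.log (n:ℝ) / Real.log 1.1 + 1) := by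
          apply Real.log_le_log (by positivity)
          have hlb : Real.logb 1.1 (n:ℝ) = Real.log (n:ℝ) / Real.log 1.1 :=
            (Real.log_div_log).symm
          rw [hlb] at hk1
          linarith
        simp only [hvdef]
        nlinarith
      exact mul_le_mul hlow hvle (hwk k).le (by linarith)
    have habs : tk k ≤ |S n ω - n * RM| := le_trans htkan (le_of_lt hn)
    apply Set.mem_iUnion.mpr
    refine ⟨k, ?_⟩
    rcases le_abs.mp habs with hle | hle
    · exact Or.inl ⟨n, hn1, hnNk, hle⟩
    · right
      rw [neg_sub] at hle
      exact ⟨n, hn1, hnNk, hle⟩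
  have hUpb : ∀ k, P (Up k) ≤ ENNReal.ofReal (Real.exp (-2 * tk k ^ 2 / (Nk k))) := fun k =>
    onesided P I hmeas hindep h01 RM hR (Nk k) (hNk1 k) (tk k) (htk0 k)
  have hDnb : ∀ k, P (Dn k) ≤ ENNReal.ofReal (Real.exp (-2 * tk k ^ 2 / (Nk k))) := by
    intro k
    have hmeas' : ∀ i, Measurable (fun ω => 1 - I i ω) := fun i =>
      measurable_const.sub (hmeas i)
    have hindep' : iIndepFun (fun i ω => 1 - I i ω) P := by
      exact hindep.comp (fun _ x => 1 - x) (fun _ => measurable_const.sub measurable_id)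
    have h01' : ∀ i ω, 1 - I i ω = 0 ∨ 1 - I i ω = 1 := by
      intro i ω; rcases h01 i ω with h | h <;> simp [h]
    have hR' : ∀ i, ∫ ω, (1 - I i ω) ∂P = 1 - RM := by
      intro i
      rw [integral_sub (integrable_const 1) (hInt i), hR i, integral_const]
      simp
    have hone := onesided P (fun i ω => 1 - I i ω) hmeas' hindep' h01' (1 - RM) hR'
      (Nk k) (hNk1 k) (tk k) (htk0 k)
    have heq : ∀ (n : ℕ) (ω : Ω),
        (∑ i ∈ Finset.range n, (1 - I i ω)) - (n:ℝ) * (1 - RM) = (n:ℝ) * RM - S n ω := by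
      intro n ω
      rw [Finset.sum_sub_distrib, Finset.sum_const, Finset.card_range, nsmul_eq_mul, mul_one]
      have hsn : S n ω = ∑ i ∈ Finset.range n, I i ω := rfl
      rw [hsn]
      ring
    have hseteq : Dn k = {ω | ∃ n, 1 ≤ n ∧ n ≤ Nk k ∧
        tk k ≤ (∑ i ∈ Finset.range n, (1 - I i ω)) - (n:ℝ) * (1 - RM)} := by
      ext ω
      simp only [hDn, Set.mem_setOf_eq]
      apply exists_congr; intro n
      rw [heq n ω]
    rw [hseteq]
    exact hone
  have hterm : ∀ k : ℕ, Real.exp (-2 * tk k ^ 2 / (Nk k))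
      ≤ σ / 24 * ((k:ℝ)+1) ^ (-(12/11) : ℝ) := by
    intro k
    have hNkpos : (0:ℝ) < (Nk k : ℝ) := by exact_mod_cast hNk1 k
    have htk2 : tk k ^ 2 = (1.1:ℝ)^k * (0.6 * Real.log ((k:ℝ)+1) + c₀) :=
      Real.sq_sqrt (mul_pos (pow_pos (by norm_num) k) (hwk k)).le
    have hstep1 : -2 * tk k ^ 2 / (Nk k) ≤ -(2/1.1) * (0.6 * Real.log ((k:ℝ)+1) + c₀) := by
      rw [htk2]
      have hNle : (Nk k : ℝ) ≤ (1.1:ℝ)^k * 1.1 := by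
        rw [← pow_succ]; exact hNkle k
      rw [neg_mul, neg_mul, neg_div, neg_le_neg_iff, le_div_iff₀ hNkpos]
      nlinarith [mul_le_mul_of_nonneg_left hNle (hwk k).le,
        pow_pos (show (0:ℝ) < 1.1 by norm_num) k]
    have hkpos : (0:ℝ) < (k:ℝ) + 1 := by positivity
    calc Real.exp (-2 * tk k ^ 2 / (Nk k))
        ≤ Real.exp (-(2/1.1) * (0.6 * Real.log ((k:ℝ)+1) + c₀)) := Real.exp_le_exp.2 hstep1
      _ = ((k:ℝ)+1) ^ (-(12/11) : ℝ) * Real.exp (-(100/99) * Real.log (24/σ)) := by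
          rw [Real.rpow_def_of_pos hkpos, ← Real.exp_add]
          congr 1
          rw [hc₀def]
          ring
      _ ≤ ((k:ℝ)+1) ^ (-(12/11) : ℝ) * (σ/24) := by
          apply mul_le_mul_of_nonneg_left ?_ (Real.rpow_nonneg hkpos.le _)
          have hy := Real.log_pos h24
          have h1 : Real.exp (-(100/99) * Real.log (24/σ))
              ≤ Real.exp (-1 * Real.log (24/σ)) := by
            apply Real.exp_le_exp.2
            nlinarith
          refine le_trans h1 ?_
          rw [neg_one_mul, Real.exp_neg, Real.exp_log (by positivity), inv_div]
      _ = σ/24 * ((k:ℝ)+1) ^ (-(12/11) : ℝ) := mul_comm _ _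
  have hPBad : P Bad ≤ ENNReal.ofReal σ := by
    calc P Bad ≤ ∑' k, P (Up k ∪ Dn k) :=
          le_trans (measure_mono hcover) (measure_iUnion_le _)
      _ ≤ ∑' k : ℕ, ENNReal.ofReal (σ/12 * ((k:ℝ)+1) ^ (-(12/11) : ℝ)) := by
          apply ENNReal.tsum_le_tsum
          intro k
          calc P (Up k ∪ Dn k) ≤ P (Up k) + P (Dn k) := measure_union_le _ _
            _ ≤ ENNReal.ofReal (Real.exp (-2 * tk k ^ 2 / (Nk k)))
                + ENNReal.ofReal (Real.exp (-2 * tk k ^ 2 / (Nk k))) :=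
                add_le_add (hUpb k) (hDnb k)
            _ = ENNReal.ofReal (2 * Real.exp (-2 * tk k ^ 2 / (Nk k))) := by
                rw [← ENNReal.ofReal_add (Real.exp_pos _).le (Real.exp_pos _).le]
                congr 1
                ring
            _ ≤ ENNReal.ofReal (σ/12 * ((k:ℝ)+1) ^ (-(12/11) : ℝ)) := by
                apply ENNReal.ofReal_le_ofReal
                have := hterm k
                linarith
      _ ≤ ENNReal.ofReal σ := by
          rw [ENNReal.tsum_eq_iSup_nat]
          apply iSup_le
          intro n
          rw [← ENNReal.ofReal_sum_of_nonneg (fun i _ => by positivity)]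
          apply ENNReal.ofReal_le_ofReal
          rw [← Finset.mul_sum]
          calc σ/12 * ∑ k ∈ Finset.range n, ((k:ℝ)+1) ^ (-(12/11) : ℝ)
              ≤ σ/12 * 12 :=
                mul_le_mul_of_nonneg_left (pseries_partial n) (by positivity)
            _ = σ := by ring
  set A : Set Ω := {ω | 1 ≤ J ω} ∩ Badᶜ with hA
  have hAmeas : MeasurableSet A := (hJmeas measurableSet_Ici).inter hBadmeas.compl
  have hsubE : A ⊆ {ω | |(1 / (J ω : ℝ)) * ∑ i ∈ Finset.range (J ω), I i ω - RM| ≤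
      Real.sqrt ((0.6 * Real.log (Real.log (J ω : ℝ) / Real.log 1.1 + 1)
        + (1 / 1.8) * Real.log (24 / σ)) / (J ω : ℝ))} := by
    rintro ω ⟨hJω, hBadω⟩
    have hn1 : 1 ≤ J ω := hJω
    have hnot : ¬ (Real.sqrt ((J ω : ℝ) * v (J ω)) < |S (J ω) ω - (J ω : ℝ) * RM|) := by
      intro hcon
      exact hBadω (Set.mem_iUnion.mpr ⟨J ω, Set.mem_iUnion.mpr ⟨hn1, hcon⟩⟩)
    push_neg at hnot
    have hnR : (0:ℝ) < (J ω : ℝ) := by exact_mod_cast hn1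
    show |(1 / (J ω : ℝ)) * S (J ω) ω - RM| ≤ Real.sqrt (v (J ω) / (J ω : ℝ))
    have he1 : (1 / (J ω : ℝ)) * S (J ω) ω - RM = (S (J ω) ω - (J ω : ℝ) * RM) / (J ω : ℝ) := by
      field_simp
    have he2 : Real.sqrt (v (J ω) / (J ω : ℝ))
        = Real.sqrt ((J ω : ℝ) * v (J ω)) / (J ω : ℝ) := by
      rw [show v (J ω) / (J ω : ℝ) = ((J ω : ℝ) * v (J ω)) / ((J ω : ℝ))^2 by
        field_simp]
      rw [Real.sqrt_div (mul_nonneg hnR.le (hv0 (J ω) hn1).le), Real.sqrt_sq hnR.le]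
    rw [he1, he2, abs_div, abs_of_pos hnR]
    gcongr
  have hJ0 : P {ω | ¬ 1 ≤ J ω} = 0 := ae_iff.mp hJ
  have hAc : P Aᶜ ≤ ENNReal.ofReal σ := by
    rw [hA, Set.compl_inter, compl_compl]
    calc P ({ω | 1 ≤ J ω}ᶜ ∪ Bad) ≤ P {ω | 1 ≤ J ω}ᶜ + P Bad := measure_union_le _ _
      _ ≤ 0 + ENNReal.ofReal σ := by
          apply add_le_add ?_ hPBad
          rw [Set.compl_setOf]
          exact le_of_eq hJ0
      _ = ENNReal.ofReal σ := by rw [zero_add]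
  have hPA : ENNReal.ofReal (1 - σ) ≤ P A := by
    have hsum := measure_add_measure_compl (μ := P) hAmeas
    rw [measure_univ] at hsum
    have h1 : ENNReal.ofReal (1 - σ) = 1 - ENNReal.ofReal σ := by
      rw [ENNReal.ofReal_sub 1 hσ0.le, ENNReal.ofReal_one]
    rw [h1, tsub_le_iff_right]
    calc (1:ℝ≥0∞) = P A + P Aᶜ := hsum.symm
      _ ≤ P A + ENNReal.ofReal σ := add_le_add_right hAc _
  have hPE : ENNReal.ofReal (1 - σ) ≤ P {ω | |(1 / (J ω : ℝ)) * ∑ i ∈ Finset.range (J ω), I i ω - RM| ≤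
      Real.sqrt ((0.6 * Real.log (Real.log (J ω : ℝ) / Real.log 1.1 + 1)
        + (1 / 1.8) * Real.log (24 / σ)) / (J ω : ℝ))} :=
    le_trans hPA (measure_mono hsubE)
  calc (1:ℝ) - σ = (ENNReal.ofReal (1 - σ)).toReal := by
        rw [ENNReal.toReal_ofReal (by linarith)]
    _ ≤ _ := ENNReal.toReal_mono (measure_ne_top P _) hPE
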